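/- There exist C > 0 and h₀ > 0 such that for every h ∈ (0,h₀), every E₀ ∈ ℝ with |E₀ − (1+h)| ≤ e^{−1/(10h)}, and every x ∈ [3.5, R+1]: |−h² v_±''(x) + (V(x) − E₀)v_±(x)| ≤ C h², and |W(v₊, v₋)(x) + 2i| ≤ C h. -/

import Mathlib

open MeasureTheory Set Real

noncomputable section

/-- The phase `Φ(x) = ∫_{4-E₀}^x √(E₀ - V(y)) dy`. -/
def wkbPhase (V : ℝ → ℝ) (E₀ : ℝ) (x : ℝ) : ℝ :=
  ∫ y in (4 - E₀)..x, Real.sqrt (E₀ - V y)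

/-- The WKB solution `v₊(x) = (E₀ - V(x))^{-1/4} e^{iΦ(x)/h}`. -/
def wkbPlus (V : ℝ → ℝ) (h E₀ : ℝ) (x : ℝ) : ℂ :=
  (((E₀ - V x) ^ (-(1 / 4 : ℝ)) : ℝ) : ℂ) * Complex.exp (Complex.I * (wkbPhase V E₀ x) / h)

/-- The WKB solution `v₋(x) = (E₀ - V(x))^{-1/4} e^{-iΦ(x)/h}`. -/
def wkbMinus (V : ℝ → ℝ) (h E₀ : ℝ) (x : ℝ) : ℂ :=
  (((E₀ - V x) ^ (-(1 / 4 : ℝ)) : ℝ) : ℂ) * Complex.exp (-Complex.I * (wkbPhase V E₀ x) / h)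


/-!
For `v = a e^{σΦ/h}` with `σ² = -1`,
`-h² v'' + (V - E₀) v = (-h² a'' - h σ (2 a' Φ' + a Φ'') + a (Φ'² - (E₀ - V))) e^{σΦ/h}`.
The phase `Φ' = √(E₀ - V)` solves the eikonal equation and the amplitude `a = (E₀ - V)^{-1/4}`
the transport equation `2 a' Φ' + a Φ'' = 0`, so only `-h² a'' e^{σΦ/h}` is left. It is `O(h²)`
uniformly in `E₀`, because `e^{-1/(10h)} ≤ h` forces `E₀ ≥ 1` while `V < 1` on the compact interval,
so that `E₀ - V` stays bounded away from `0`. The Wronskian is exactly `-2i a² Φ' = -2i`.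
-/

open Filter Topology

def wkbAnsatz (a Φ : ℝ → ℝ) (σ : ℂ) (h x : ℝ) : ℂ :=
  (a x : ℂ) * Complex.exp (σ * Φ x / h)

section Ansatz

variable {a a₁ Φ p : ℝ → ℝ} {σ : ℂ} {h x : ℝ}

lemma hasDerivAt_wkbAnsatz {a' p' : ℝ} (ha : HasDerivAt a a' x) (hΦ : HasDerivAt Φ p' x) :
    HasDerivAt (wkbAnsatz a Φ σ h) ((a' + a x * σ * p' / h) * Complex.exp (σ * Φ x / h)) x := by
  have hE := ((hΦ.ofReal_comp.const_mul σ).div_const (h : ℂ)).cexp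
  exact (ha.ofReal_comp.mul hE).congr_deriv (by ring)

lemma hasDerivAt_deriv_wkbAnsatz {a₂ p₁ : ℝ} (ha : ∀ᶠ y in 𝓝 x, HasDerivAt a (a₁ y) y)
    (hΦ : ∀ᶠ y in 𝓝 x, HasDerivAt Φ (p y) y) (ha₁ : HasDerivAt a₁ a₂ x)
    (hp : HasDerivAt p p₁ x) :
    HasDerivAt (deriv (wkbAnsatz a Φ σ h))
      ((a₂ + σ * (2 * a₁ x * p x + a x * p₁) / h + σ ^ 2 * a x * p x ^ 2 / h ^ 2)
        * Complex.exp (σ * Φ x / h)) x := by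
  have hderiv : deriv (wkbAnsatz a Φ σ h) =ᶠ[𝓝 x]
      fun y => (a₁ y + a y * σ * p y / h) * Complex.exp (σ * Φ y / h) := by
    filter_upwards [ha, hΦ] with y hay hΦy
    exact (hasDerivAt_wkbAnsatz hay hΦy).deriv
  have hE := (((hΦ.self_of_nhds).ofReal_comp.const_mul σ).div_const (h : ℂ)).cexp
  have hamp : HasDerivAt (fun y => (a₁ y : ℂ) + a y * σ * p y / h)
      (a₂ + ((a₁ x : ℂ) * σ * p x + a x * σ * p₁) / h) x := ha₁.ofReal_comp.add
    ((((ha.self_of_nhds).ofReal_comp.mul_const σ).mul hp.ofReal_comp).div_const (h : ℂ))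
  refine ((hamp.mul hE).congr_of_eventuallyEq hderiv).congr_deriv ?_
  ring

lemma wkbAnsatz_residual {a₂ p₁ w : ℝ} (hσ : σ ^ 2 = -1) (hh : h ≠ 0)
    (ha : ∀ᶠ y in 𝓝 x, HasDerivAt a (a₁ y) y) (hΦ : ∀ᶠ y in 𝓝 x, HasDerivAt Φ (p y) y)
    (ha₁ : HasDerivAt a₁ a₂ x) (hp : HasDerivAt p p₁ x)
    (heikonal : p x ^ 2 + w = 0) (htransport : 2 * a₁ x * p x + a x * p₁ = 0) :
    -(h : ℂ) ^ 2 * deriv (deriv (wkbAnsatz a Φ σ h)) x + (w : ℂ) * wkbAnsatz a Φ σ h x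
      = -(h : ℂ) ^ 2 * a₂ * Complex.exp (σ * Φ x / h) := by
  rw [(hasDerivAt_deriv_wkbAnsatz ha hΦ ha₁ hp).deriv, wkbAnsatz]
  have hh' : (h : ℂ) ≠ 0 := by exact_mod_cast hh
  have heik : (p x : ℂ) ^ 2 + w = 0 := by exact_mod_cast heikonal
  have htr : 2 * (a₁ x : ℂ) * p x + a x * p₁ = 0 := by exact_mod_cast htransport
  generalize Complex.exp (σ * Φ x / h) = E
  field_simp
  linear_combination ((a x : ℂ) * E) * heik + (-(a x : ℂ) * p x ^ 2 * E) * hσ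
    + (-σ * h * E) * htr

lemma wkbAnsatz_wronskian {a' p' : ℝ} (ha : HasDerivAt a a' x) (hΦ : HasDerivAt Φ p' x)
    (hh : h ≠ 0) :
    wkbAnsatz a Φ Complex.I h x * (h * deriv (wkbAnsatz a Φ (-Complex.I) h) x)
      - wkbAnsatz a Φ (-Complex.I) h x * (h * deriv (wkbAnsatz a Φ Complex.I h) x)
      = -2 * Complex.I * (a x ^ 2 * p' : ℝ) := by
  rw [(hasDerivAt_wkbAnsatz ha hΦ).deriv, (hasDerivAt_wkbAnsatz ha hΦ).deriv, wkbAnsatz,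
    wkbAnsatz]
  have hh' : (h : ℂ) ≠ 0 := by exact_mod_cast hh
  have hexp : Complex.exp (Complex.I * Φ x / h) * Complex.exp (-Complex.I * Φ x / h) = 1 := by
    rw [← Complex.exp_add, ← Complex.exp_zero]; ring_nf
  generalize Complex.exp (Complex.I * Φ x / h) = Ep at hexp ⊢
  generalize Complex.exp (-Complex.I * Φ x / h) = Em at hexp ⊢
  push_cast
  field_simp
  linear_combination (-2 * Complex.I * (a x : ℂ) ^ 2 * p') * hexp

lemma norm_exp_mul_ofReal_div (hσ : σ.re = 0) (r : ℝ) : ‖Complex.exp (σ * r / h)‖ = 1 := by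
  simp [Complex.norm_exp, hσ]

end Ansatz

def wkbAmplitude (V : ℝ → ℝ) (E₀ x : ℝ) : ℝ :=
  (E₀ - V x) ^ (-(1 / 4 : ℝ))

lemma wkbPlus_eq_wkbAnsatz (V : ℝ → ℝ) (h E₀ : ℝ) :
    wkbPlus V h E₀ = wkbAnsatz (wkbAmplitude V E₀) (wkbPhase V E₀) Complex.I h := rfl

lemma wkbMinus_eq_wkbAnsatz (V : ℝ → ℝ) (h E₀ : ℝ) :
    wkbMinus V h E₀ = wkbAnsatz (wkbAmplitude V E₀) (wkbPhase V E₀) (-Complex.I) h := rfl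

lemma rpow_neg_one_quarter_eq {q : ℝ} (hq : 0 < q) :
    q ^ (-(1 / 4 : ℝ)) = q ^ (-(5 / 4 : ℝ)) * q := by
  rw [← Real.rpow_add_one hq.ne']; norm_num

lemma rpow_neg_one_quarter_sq_mul_sqrt {q : ℝ} (hq : 0 < q) :
    (q ^ (-(1 / 4 : ℝ))) ^ 2 * √q = 1 := by
  rw [Real.sqrt_eq_rpow, ← Real.rpow_natCast, ← Real.rpow_mul hq.le, ← Real.rpow_add hq]
  norm_num

lemma rpow_neg_one_quarter_transport {q : ℝ} (hq : 0 < q) (d : ℝ) :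
    2 * (d / 4 * q ^ (-(5 / 4 : ℝ))) * √q + q ^ (-(1 / 4 : ℝ)) * (-d / (2 * √q)) = 0 := by
  have hs : 0 < √q := Real.sqrt_pos.2 hq
  have hss : √q * √q = q := Real.mul_self_sqrt hq.le
  rw [rpow_neg_one_quarter_eq hq]
  field_simp
  linear_combination (4 * d * q ^ (-(5 / 4 : ℝ))) * hss

lemma abs_wkbAmplitude_deriv2_le {d₁ d₂ q δ K₁ K₂ : ℝ} (hδ : 0 < δ) (hq : δ ≤ q)
    (h₁ : |d₁| ≤ K₁) (h₂ : |d₂| ≤ K₂) :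
    |d₂ / 4 * q ^ (-(5 / 4 : ℝ)) + 5 / 16 * d₁ ^ 2 * q ^ (-(9 / 4 : ℝ))|
      ≤ K₂ / 4 * δ ^ (-(5 / 4 : ℝ)) + 5 / 16 * K₁ ^ 2 * δ ^ (-(9 / 4 : ℝ)) := by
  have hq₅ : q ^ (-(5 / 4 : ℝ)) ≤ δ ^ (-(5 / 4 : ℝ)) :=
    Real.rpow_le_rpow_of_nonpos hδ hq (by norm_num)
  have hq₉ : q ^ (-(9 / 4 : ℝ)) ≤ δ ^ (-(9 / 4 : ℝ)) :=
    Real.rpow_le_rpow_of_nonpos hδ hq (by norm_num)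
  have hqpos : 0 < q := hδ.trans_le hq
  calc _ ≤ |d₂| / 4 * q ^ (-(5 / 4 : ℝ)) + 5 / 16 * |d₁| ^ 2 * q ^ (-(9 / 4 : ℝ)) := by
        refine (abs_add_le _ _).trans_eq ?_
        simp only [abs_mul, abs_div, sq_abs, abs_of_pos (Real.rpow_pos_of_pos hqpos _)]
        norm_num
    _ ≤ _ := by
        gcongr
        linarith [abs_nonneg d₂]

section Potential

variable {V : ℝ → ℝ} {σ : ℂ} {h E x : ℝ}

lemma hasDerivAt_wkbPhase (hV : Continuous V) :
    HasDerivAt (wkbPhase V E) (√(E - V x)) x := by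
  have hc : Continuous fun y => √(E - V y) := (continuous_const.sub hV).sqrt
  exact intervalIntegral.integral_hasDerivAt_right (hc.intervalIntegrable _ _)
    hc.stronglyMeasurable.stronglyMeasurableAtFilter hc.continuousAt

lemma hasDerivAt_sqrt_sub (hV : DifferentiableAt ℝ V x) (hx : V x < E) :
    HasDerivAt (fun y => √(E - V y)) (-deriv V x / (2 * √(E - V x))) x :=
  (hV.hasDerivAt.const_sub E).sqrt (sub_pos.2 hx).ne'

lemma hasDerivAt_wkbAmplitude (hV : DifferentiableAt ℝ V x) (hx : V x < E) :
    HasDerivAt (wkbAmplitude V E) (deriv V x / 4 * (E - V x) ^ (-(5 / 4 : ℝ))) x := by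
  refine ((hV.hasDerivAt.const_sub E).rpow_const (p := -(1 / 4 : ℝ))
    (Or.inl (sub_pos.2 hx).ne')).congr_deriv ?_
  rw [show -(1 / 4 : ℝ) - 1 = -(5 / 4) by norm_num]
  ring

lemma hasDerivAt_wkbAmplitude_deriv (hV : ContDiff ℝ 2 V) (hx : V x < E) :
    HasDerivAt (fun y => deriv V y / 4 * (E - V y) ^ (-(5 / 4 : ℝ)))
      (deriv (deriv V) x / 4 * (E - V x) ^ (-(5 / 4 : ℝ))
        + 5 / 16 * deriv V x ^ 2 * (E - V x) ^ (-(9 / 4 : ℝ))) x := by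
  have hV' : Differentiable ℝ (deriv V) :=
    (contDiff_succ_iff_deriv.mp hV).2.2.differentiable one_ne_zero
  have hV₁ : HasDerivAt V (deriv V x) x := (hV.differentiable two_ne_zero x).hasDerivAt
  refine (((hV' x).hasDerivAt.div_const 4).mul ((hV₁.const_sub E).rpow_const
    (p := -(5 / 4 : ℝ)) (Or.inl (sub_pos.2 hx).ne'))).congr_deriv ?_
  rw [show -(5 / 4 : ℝ) - 1 = -(9 / 4) by norm_num]
  ring

lemma wkb_residual_eq (hV : ContDiff ℝ 2 V) (hσ : σ ^ 2 = -1) (hh : h ≠ 0)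
    (hx : ∀ᶠ y in 𝓝 x, V y < E) :
    -(h : ℂ) ^ 2 * deriv (deriv (wkbAnsatz (wkbAmplitude V E) (wkbPhase V E) σ h)) x
        + ((V x - E : ℝ) : ℂ) * wkbAnsatz (wkbAmplitude V E) (wkbPhase V E) σ h x
      = -(h : ℂ) ^ 2 * ((deriv (deriv V) x / 4 * (E - V x) ^ (-(5 / 4 : ℝ))
          + 5 / 16 * deriv V x ^ 2 * (E - V x) ^ (-(9 / 4 : ℝ)) : ℝ) : ℂ)
        * Complex.exp (σ * wkbPhase V E x / h) := by
  have hV₁ : Differentiable ℝ V := hV.differentiable two_ne_zero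
  have hqx : 0 < E - V x := sub_pos.2 hx.self_of_nhds
  refine wkbAnsatz_residual hσ hh (hx.mono fun y hy => hasDerivAt_wkbAmplitude (hV₁ y) hy)
    (.of_forall fun y => hasDerivAt_wkbPhase hV.continuous)
    (hasDerivAt_wkbAmplitude_deriv hV hx.self_of_nhds)
    (hasDerivAt_sqrt_sub (hV₁ x) hx.self_of_nhds) ?_ (rpow_neg_one_quarter_transport hqx _)
  rw [Real.sq_sqrt hqx.le]
  ring

lemma norm_wkb_residual_le {δ K₁ K₂ : ℝ} (hV : ContDiff ℝ 2 V) (hσ : σ ^ 2 = -1)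
    (hσre : σ.re = 0) (hh : 0 < h) (hx : ∀ᶠ y in 𝓝 x, V y < E) (hδ : 0 < δ)
    (hq : δ ≤ E - V x) (h₁ : |deriv V x| ≤ K₁) (h₂ : |deriv (deriv V) x| ≤ K₂) :
    ‖-(h : ℂ) ^ 2 * deriv (deriv (wkbAnsatz (wkbAmplitude V E) (wkbPhase V E) σ h)) x
        + ((V x - E : ℝ) : ℂ) * wkbAnsatz (wkbAmplitude V E) (wkbPhase V E) σ h x‖
      ≤ (K₂ / 4 * δ ^ (-(5 / 4 : ℝ)) + 5 / 16 * K₁ ^ 2 * δ ^ (-(9 / 4 : ℝ))) * h ^ 2 := by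
  rw [wkb_residual_eq hV hσ hh.ne' hx, norm_mul, norm_exp_mul_ofReal_div hσre, norm_mul,
    Complex.norm_real, Real.norm_eq_abs, norm_neg, norm_pow, Complex.norm_real,
    Real.norm_eq_abs, abs_of_pos hh, mul_one, mul_comm]
  gcongr
  exact abs_wkbAmplitude_deriv2_le hδ hq h₁ h₂

lemma wkb_wronskian_eq (hV : Differentiable ℝ V) (hh : h ≠ 0) (hx : V x < E) :
    wkbAnsatz (wkbAmplitude V E) (wkbPhase V E) Complex.I h x
        * (h * deriv (wkbAnsatz (wkbAmplitude V E) (wkbPhase V E) (-Complex.I) h) x)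
      - wkbAnsatz (wkbAmplitude V E) (wkbPhase V E) (-Complex.I) h x
        * (h * deriv (wkbAnsatz (wkbAmplitude V E) (wkbPhase V E) Complex.I h) x)
      = -2 * Complex.I := by
  rw [wkbAnsatz_wronskian (hasDerivAt_wkbAmplitude (hV x) hx)
    (hasDerivAt_wkbPhase hV.continuous) hh, wkbAmplitude,
    rpow_neg_one_quarter_sq_mul_sqrt (sub_pos.2 hx)]
  simp

end Potential

lemma exp_neg_one_div_le_self {h : ℝ} (hh : 0 < h) (hh₀ : h ≤ 1 / 200) :
    Real.exp (-1 / (10 * h)) ≤ h := by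
  have ht : 0 < 1 / (10 * h) := by positivity
  have hquad : (1 / (10 * h)) ^ 2 / 2 ≤ Real.exp (1 / (10 * h)) := by
    simpa using Real.pow_div_factorial_le_exp _ ht.le 2
  rw [neg_div, Real.exp_neg]
  calc (Real.exp (1 / (10 * h)))⁻¹ ≤ ((1 / (10 * h)) ^ 2 / 2)⁻¹ :=
        inv_anti₀ (by positivity) hquad
    _ = 200 * h ^ 2 := by field_simp; ring
    _ ≤ h := by nlinarith

theorem wkb_solutions_estimates_general
    (V : ℝ → ℝ)
    (hV_smooth : ContDiff ℝ (⊤ : ℕ∞) V)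
    (hV_lt : ∀ x : ℝ, 3 < x → V x < 1)
    (R : ℝ) :
    ∃ C > (0 : ℝ), ∃ h₀ > (0 : ℝ), ∀ h : ℝ, 0 < h → h < h₀ →
      ∀ E₀ : ℝ, |E₀ - (1 + h)| ≤ Real.exp (-1 / (10 * h)) →
      ∀ x ∈ Set.Icc (3.5 : ℝ) (R + 1),
        ‖-(h : ℂ) ^ 2 * deriv (deriv (wkbPlus V h E₀)) x
            + ((V x - E₀ : ℝ) : ℂ) * wkbPlus V h E₀ x‖ ≤ C * h ^ 2 ∧
        ‖-(h : ℂ) ^ 2 * deriv (deriv (wkbMinus V h E₀)) x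
            + ((V x - E₀ : ℝ) : ℂ) * wkbMinus V h E₀ x‖ ≤ C * h ^ 2 ∧
        ‖(wkbPlus V h E₀ x * ((h : ℂ) * deriv (wkbMinus V h E₀) x)
            - wkbMinus V h E₀ x * ((h : ℂ) * deriv (wkbPlus V h E₀) x))
            + 2 * Complex.I‖ ≤ C * h := by
  have hV : ContDiff ℝ 2 V := hV_smooth.of_le (WithTop.coe_le_coe.2 le_top)
  obtain ⟨δ, hδ, hδK⟩ := isCompact_Icc.exists_forall_le' (a := 0)
    (f := fun y => 1 - V y) (s := Icc (3.5 : ℝ) (R + 1))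
    (continuous_const.sub hV.continuous).continuousOn
    fun y hy => sub_pos.2 (hV_lt y (by linarith [hy.1]))
  obtain ⟨K₁, hK₁⟩ := isCompact_Icc.exists_bound_of_continuousOn
    (hV.continuous_deriv one_le_two).continuousOn (s := Icc (3.5 : ℝ) (R + 1))
  obtain ⟨K₂, hK₂⟩ := isCompact_Icc.exists_bound_of_continuousOn
    ((contDiff_succ_iff_deriv.mp hV).2.2.continuous_deriv le_rfl).continuousOn
    (s := Icc (3.5 : ℝ) (R + 1))
  set B := K₂ / 4 * δ ^ (-(5 / 4 : ℝ)) + 5 / 16 * K₁ ^ 2 * δ ^ (-(9 / 4 : ℝ))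
  refine ⟨max B 1, lt_max_of_lt_right one_pos, 1 / 200, by norm_num,
    fun h hh hh₀ E₀ hE₀_near x hx => ?_⟩
  have hE₀_ge : 1 ≤ E₀ := by
    linarith [(abs_le.1 hE₀_near).1, exp_neg_one_div_le_self hh hh₀.le]
  have hnear : ∀ᶠ y in 𝓝 x, V y < E₀ :=
    (eventually_gt_nhds (by linarith [hx.1] : (3 : ℝ) < x)).mono
      fun y hy => (hV_lt y hy).trans_le hE₀_ge
  have hres (σ : ℂ) (hσ : σ ^ 2 = -1) (hσre : σ.re = 0) :=
    (norm_wkb_residual_le hV hσ hσre hh hnear hδ (by linarith [hδK x hx])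
      (by simpa using hK₁ x hx) (by simpa using hK₂ x hx)).trans
      (mul_le_mul_of_nonneg_right (le_max_left B 1) (sq_nonneg h))
  rw [wkbPlus_eq_wkbAnsatz, wkbMinus_eq_wkbAnsatz,
    wkb_wronskian_eq (hV.differentiable two_ne_zero) hh.ne' hnear.self_of_nhds]
  refine ⟨hres _ Complex.I_sq (by simp), hres _ (by simp) (by simp), by simp; positivity⟩

/-- On `[3.5, R+1]` the WKB functions `v_±` solve `(P - E₀) v_± = O(h²)`
and their semiclassical Wronskian satisfies `W(v₊, v₋) = -2i + O(h)`. -/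
theorem wkb_solutions_estimates
    (V : ℝ → ℝ)
    (hV_smooth : ContDiff ℝ (⊤ : ℕ∞) V) (hV_comp : HasCompactSupport V)
    (hV_nonneg : ∀ x, 0 ≤ V x) (hV_even : ∀ x, V (-x) = V x)
    (hV_inner : ∀ x ∈ Set.Icc (-1 : ℝ) 1, V x = x ^ 2 + 1)
    (hV_slope : ∀ x ∈ Set.Icc (2 : ℝ) 3.5, V x = 4 - x)
    (hV_lt : ∀ x : ℝ, 3 < x → V x < 1)
    (hV_supp : tsupport V ⊆ Set.Icc (-5 : ℝ) 5)
    (R : ℝ) (hR : 5 < R) :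
    ∃ C > (0 : ℝ), ∃ h₀ > (0 : ℝ), ∀ h : ℝ, 0 < h → h < h₀ →
      ∀ E₀ : ℝ, |E₀ - (1 + h)| ≤ Real.exp (-1 / (10 * h)) →
      ∀ x ∈ Set.Icc (3.5 : ℝ) (R + 1),
        ‖-(h : ℂ) ^ 2 * deriv (deriv (wkbPlus V h E₀)) x
            + ((V x - E₀ : ℝ) : ℂ) * wkbPlus V h E₀ x‖ ≤ C * h ^ 2 ∧
        ‖-(h : ℂ) ^ 2 * deriv (deriv (wkbMinus V h E₀)) x
            + ((V x - E₀ : ℝ) : ℂ) * wkbMinus V h E₀ x‖ ≤ C * h ^ 2 ∧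
        ‖(wkbPlus V h E₀ x * ((h : ℂ) * deriv (wkbMinus V h E₀) x)
            - wkbMinus V h E₀ x * ((h : ℂ) * deriv (wkbPlus V h E₀) x))
            + 2 * Complex.I‖ ≤ C * h :=
  wkb_solutions_estimates_general V hV_smooth hV_lt R
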